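/- The space of eigenfunctions of eigenvalue 1 for Δ_F on (ℂⁿ, flat metric, F = -|z|²) with n ≥ 2 is infinite dimensional: the functions u_k(z) = z₂ᵏ·z̄₁ for k ∈ ℕ are linearly independent and each satisfies Δ_F u_k = -u_k. -/

import Mathlib

open Complex

/-- Wirtinger derivative `∂u/∂zᵢ`. -/
noncomputable def wz {n : ℕ} (u : (Fin n → ℂ) → ℂ) (i : Fin n) (z : Fin n → ℂ) : ℂ :=
  (fderiv ℝ u z (Pi.single i 1) - Complex.I * fderiv ℝ u z (Pi.single i Complex.I)) / 2

/-- Conjugate Wirtinger derivative `∂u/∂z̄ᵢ`. -/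
noncomputable def wzbar {n : ℕ} (u : (Fin n → ℂ) → ℂ) (i : Fin n) (z : Fin n → ℂ) : ℂ :=
  (fderiv ℝ u z (Pi.single i 1) + Complex.I * fderiv ℝ u z (Pi.single i Complex.I)) / 2

/-- Weighted `∂̄`-Laplacian with weight `F` on flat `ℂⁿ`. -/
noncomputable def wlapC {n : ℕ} (F u : (Fin n → ℂ) → ℂ) (z : Fin n → ℂ) : ℂ :=
  ∑ i, wz (wzbar u i) i z + ∑ i, wz F i z * wzbar u i z


/-! The conjugate Wirtinger derivatives of `u_k = z₂ᵏ z̄₁` are `∂̄ᵢ u_k = δᵢ₁ z₂ᵏ`, functions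
independent of `z₁`, so the second-order part `∑ᵢ ∂ᵢ ∂̄ᵢ u_k` of `Δ_F` vanishes; since
`∂ᵢ F = -z̄ᵢ`, the first-order part is `-z̄₁ z₂ᵏ = -u_k`. On the complex line `z = (1, t, 0, …, 0)`
the `u_k` restrict to the monomials `tᵏ`, which are linearly independent. -/

open ComplexConjugate

theorem linearIndependent_pow_fun (R : Type*) [CommRing R] [IsDomain R] [Infinite R] :
    LinearIndependent R fun (k : ℕ) (t : R) => t ^ k := by
  have hinj : Function.Injective (LinearMap.pi (Polynomial.leval (R := R))) :=
    fun p q h => Polynomial.funext fun t => congrFun h t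
  have hmon : (LinearMap.pi Polynomial.leval ∘ Polynomial.basisMonomials R) =
      fun (k : ℕ) (t : R) => t ^ k := by
    funext k t
    simp
  exact hmon ▸
    (Polynomial.basisMonomials R).linearIndependent.map' _ (LinearMap.ker_eq_bot.mpr hinj)

section Wirtinger

variable {n : ℕ} {f g : (Fin n → ℂ) → ℂ} {i j : Fin n} {z : Fin n → ℂ}

theorem fderiv_conj :
    fderiv ℝ (fun z => conj (f z)) z =
      ((starL' ℝ : ℂ ≃L[ℝ] ℂ) : ℂ →L[ℝ] ℂ).comp (fderiv ℝ f z) :=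
  fderiv_star

theorem wz_conj : wz (fun z => conj (f z)) i z = conj (wzbar f i z) := by
  simp [wz, wzbar, fderiv_conj, conj_I, map_ofNat]
  ring

theorem wzbar_conj : wzbar (fun z => conj (f z)) i z = conj (wz f i z) := by
  simp [wz, wzbar, fderiv_conj, conj_I, map_ofNat]

theorem wz_mul (hf : DifferentiableAt ℝ f z) (hg : DifferentiableAt ℝ g z) :
    wz (fun z => f z * g z) i z = f z * wz g i z + g z * wz f i z := by
  simp only [wz, fderiv_fun_mul hf hg, add_apply, smul_apply, smul_eq_mul]
  ring

theorem wzbar_mul (hf : DifferentiableAt ℝ f z) (hg : DifferentiableAt ℝ g z) :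
    wzbar (fun z => f z * g z) i z = f z * wzbar g i z + g z * wzbar f i z := by
  simp only [wzbar, fderiv_fun_mul hf hg, add_apply, smul_apply, smul_eq_mul]
  ring

theorem wz_neg : wz (fun z => -f z) i z = -wz f i z := by
  simp only [wz, fderiv_fun_neg, neg_apply]
  ring

theorem wz_sum {ι : Type*} (s : Finset ι) {f : ι → (Fin n → ℂ) → ℂ}
    (hf : ∀ j ∈ s, DifferentiableAt ℝ (f j) z) :
    wz (fun z => ∑ j ∈ s, f j z) i z = ∑ j ∈ s, wz (f j) i z := by
  simp only [wz, fderiv_fun_sum hf]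
  simp [Finset.mul_sum, ← Finset.sum_sub_distrib, Finset.sum_div]

theorem fderiv_real_single_eq_mul_fderiv (hf : DifferentiableAt ℂ f z) (c : ℂ) :
    fderiv ℝ f z (Pi.single i c) = c * fderiv ℂ f z (Pi.single i 1) := by
  rw [(hf.hasFDerivAt.restrictScalars ℝ).fderiv, ContinuousLinearMap.coe_restrictScalars',
    ← smul_eq_mul, ← map_smul, ← Pi.single_smul', smul_eq_mul, mul_one]

theorem wzbar_eq_zero_of_differentiableAt (hf : DifferentiableAt ℂ f z) : wzbar f i z = 0 := by
  rw [wzbar, fderiv_real_single_eq_mul_fderiv hf, fderiv_real_single_eq_mul_fderiv hf,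
    ← mul_assoc, I_mul_I]
  ring

theorem wz_eq_fderiv_of_differentiableAt (hf : DifferentiableAt ℂ f z) :
    wz f i z = fderiv ℂ f z (Pi.single i 1) := by
  rw [wz, fderiv_real_single_eq_mul_fderiv hf, fderiv_real_single_eq_mul_fderiv hf,
    ← mul_assoc, I_mul_I]
  ring

theorem wz_const (c : ℂ) : wz (fun _ => c) i z = 0 := by
  simp [wz]

theorem wz_apply_pow (k : ℕ) :
    wz (fun z => z j ^ k) i z = if i = j then k * z j ^ (k - 1) else 0 := by
  have hd : HasFDerivAt (fun z : Fin n → ℂ => z j ^ k) _ z :=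
    (hasDerivAt_pow k (z j)).hasFDerivAt.comp z (hasFDerivAt_apply (𝕜 := ℂ) j z)
  rw [wz_eq_fderiv_of_differentiableAt (by fun_prop), hd.fderiv]
  simp [Pi.single_apply, eq_comm]

theorem wz_apply : wz (fun z => z j) i z = if i = j then 1 else 0 := by
  simpa using wz_apply_pow (i := i) (j := j) (z := z) 1

theorem wz_conj_apply : wz (fun z => conj (z j)) i z = 0 := by
  rw [wz_conj (f := fun z => z j), wzbar_eq_zero_of_differentiableAt (by fun_prop), map_zero]

theorem wzbar_conj_apply : wzbar (fun z => conj (z j)) i z = if i = j then 1 else 0 := by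
  rw [wzbar_conj (f := fun z => z j), wz_apply]
  split_ifs <;> simp

theorem wz_neg_sum_mul_conj : wz (fun z => -∑ l, z l * conj (z l)) i z = -conj (z i) := by
  rw [wz_neg, wz_sum _ fun l _ => by fun_prop]
  simp (disch := fun_prop) [wz_mul, wz_conj_apply, wz_apply]

end Wirtinger

section Eigenfunctions

variable {n : ℕ} {i j : Fin n}

theorem wzbar_apply_pow_mul_conj (k : ℕ) (l : Fin n) (z : Fin n → ℂ) :
    wzbar (fun z => z j ^ k * conj (z i)) l z = if l = i then z j ^ k else 0 := by
  rw [wzbar_mul (by fun_prop) (by fun_prop), wzbar_conj_apply,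
    wzbar_eq_zero_of_differentiableAt (by fun_prop)]
  simp

theorem wlapC_apply_pow_mul_conj (hij : i ≠ j) (k : ℕ) (z : Fin n → ℂ) :
    wlapC (fun z => -∑ l, z l * conj (z l)) (fun z => z j ^ k * conj (z i)) z
      = -(z j ^ k * conj (z i)) := by
  have hbar (l : Fin n) : wzbar (fun z => z j ^ k * conj (z i)) l
      = fun z => if l = i then z j ^ k else 0 :=
    funext (wzbar_apply_pow_mul_conj k l)
  have hsecond (l : Fin n) : wz (wzbar (fun z => z j ^ k * conj (z i)) l) l z = 0 := by
    rw [hbar]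
    split_ifs with hl
    · rw [wz_apply_pow, if_neg (hl ▸ hij)]
    · exact wz_const 0
  simp [wlapC, hsecond, wzbar_apply_pow_mul_conj, wz_neg_sum_mul_conj]
  ring

theorem linearIndependent_apply_pow_mul_conj (hij : i ≠ j) :
    LinearIndependent ℂ fun (k : ℕ) (z : Fin n → ℂ) => z j ^ k * conj (z i) := by
  have hline : LinearMap.funLeft ℂ ℂ (fun t => Pi.single j t + Pi.single i 1) ∘
      (fun (k : ℕ) (z : Fin n → ℂ) => z j ^ k * conj (z i)) =
        fun (k : ℕ) (t : ℂ) => t ^ k := by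
    funext k t
    simp [hij, hij.symm]
  exact LinearIndependent.of_comp _ (hline ▸ linearIndependent_pow_fun ℂ)

end Eigenfunctions

/-- On `(ℂⁿ, flat, F = -|z|²)` with `n ≥ 2`, the 1-eigenspace of `Δ_F` is infinite
dimensional: the functions `u_k(z) = z₂ᵏ z̄₁`, `k ∈ ℕ`, are linearly independent and
each satisfies `Δ_F u_k = -u_k`. -/
theorem stmt6 (n : ℕ) (hn : 2 ≤ n)
    (F : (Fin n → ℂ) → ℂ) (hF : ∀ z, F z = -∑ i, z i * starRingEnd ℂ (z i))
    (u : ℕ → (Fin n → ℂ) → ℂ)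
    (hu : ∀ k z, u k z = (z ⟨1, by omega⟩) ^ k * starRingEnd ℂ (z ⟨0, by omega⟩)) :
    LinearIndependent ℂ u ∧ ∀ k z, wlapC F (u k) z = -(u k z) := by
  have h01 : (⟨0, by omega⟩ : Fin n) ≠ ⟨1, by omega⟩ := by simp
  obtain rfl : F = fun z => -∑ i, z i * conj (z i) := funext hF
  obtain rfl : u = fun k z => z ⟨1, by omega⟩ ^ k * conj (z ⟨0, by omega⟩) :=
    funext fun k => funext (hu k)
  exact ⟨linearIndependent_apply_pow_mul_conj h01, wlapC_apply_pow_mul_conj h01⟩
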